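/- Every discrete META A with a distinguished location lf can be effectively extended to a discrete META A' — obtained by adding a fresh private location reachable from the initial location with unguarded self-loops incrementing each energy variable, a fresh location l1 reachable from lf, and a fresh final location reachable without guard from both the private location and l1 — such that A' is ∃-ET-EN-opaque if and only if lf is reachable in A. Hence reachability in discrete METAs reduces to ∃-ET-EN-opacity. -/

import Mathlib

namespace METAOpacity

open scoped Classical

/-- An inequality `v ⋈ d`: a variable index (clocks first, then energy variables),
a comparison code (`0` = `<`, `1` = `≤`, `2` = `≥`, `3` = `>`) and an integer constant. -/
abbrev Ineq : Type := ℕ × ℕ × ℤ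

/-- An edge: source location, guard, action (`none` = ε), clock resets,
integer energy updates, target location. -/
abbrev Edge : Type := ℕ × List Ineq × Option ℕ × List ℕ × List ℤ × ℕ

/-- A finitely presented guarded multi-energy timed automaton (guarded META):
number of actions, number of locations (location `0` is the initial one), number of
clocks, number of energy variables, list of private locations, list of final locations,
invariants (one per location), integer energy rates (one list per location, one entry per
energy variable), and edges.  Being a nested product of countable discrete data, this
type is `Primcodable`, so computability of functions on it makes sense. -/
abbrev GMETA : Type :=
  ℕ × ℕ × ℕ × ℕ × List ℕ × List ℕ × List (List Ineq) × List (List ℤ) × List Edge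

def numAct (A : GMETA) : ℕ := A.1
def numLoc (A : GMETA) : ℕ := A.2.1
def numClk (A : GMETA) : ℕ := A.2.2.1
def numEn (A : GMETA) : ℕ := A.2.2.2.1
def privLocs (A : GMETA) : List ℕ := A.2.2.2.2.1
def finalLocs (A : GMETA) : List ℕ := A.2.2.2.2.2.1
def invs (A : GMETA) : List (List Ineq) := A.2.2.2.2.2.2.1
def rates (A : GMETA) : List (List ℤ) := A.2.2.2.2.2.2.2.1
def edges (A : GMETA) : List Edge := A.2.2.2.2.2.2.2.2

def edgeSrc (e : Edge) : ℕ := e.1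
def edgeGuard (e : Edge) : List Ineq := e.2.1
def edgeAct (e : Edge) : Option ℕ := e.2.2.1
def edgeResets (e : Edge) : List ℕ := e.2.2.2.1
def edgeUpdates (e : Edge) : List ℤ := e.2.2.2.2.1
def edgeTgt (e : Edge) : ℕ := e.2.2.2.2.2

/-- A semantic state: location, clock valuation, energy valuation. -/
abbrev EState : Type := ℕ × (ℕ → ℝ) × (ℕ → ℝ)

def initState : EState := (0, fun _ => 0, fun _ => 0)

/-- Satisfaction of a single comparison. -/
def cmpSat (c : ℕ) (x : ℝ) (d : ℤ) : Prop :=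
  if c = 0 then x < (d : ℝ)
  else if c = 1 then x ≤ (d : ℝ)
  else if c = 2 then (d : ℝ) ≤ x
  else if c = 3 then (d : ℝ) < x
  else False

/-- Value of variable `i` (a clock if `i < numClk A`, an energy variable otherwise). -/
def varVal (A : GMETA) (w v : ℕ → ℝ) (i : ℕ) : ℝ :=
  if i < numClk A then w i else v (i - numClk A)

/-- Satisfaction of a conjunction of inequalities. -/
def satIneqs (A : GMETA) (w v : ℕ → ℝ) (g : List Ineq) : Prop :=
  ∀ q ∈ g, cmpSat q.2.1 (varVal A w v q.1) q.2.2

def invOf (A : GMETA) (l : ℕ) : List Ineq := (invs A).getD l []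

def rateOf (A : GMETA) (l i : ℕ) : ℤ := ((rates A).getD l []).getD i 0

/-- A state is valid when its location exists, clocks and energies are non-negative,
and the invariant of the current location holds. -/
def validState (A : GMETA) (s : EState) : Prop :=
  s.1 < numLoc A ∧ (∀ i, 0 ≤ s.2.1 i) ∧ (∀ i, 0 ≤ s.2.2 i) ∧
    satIneqs A s.2.1 s.2.2 (invOf A s.1)

def elapseClocks (w : ℕ → ℝ) (t : ℝ) : ℕ → ℝ := fun i => w i + t

def elapseEnergies (A : GMETA) (l : ℕ) (v : ℕ → ℝ) (t : ℝ) : ℕ → ℝ :=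
  fun i => v i + (rateOf A l i : ℝ) * t

def resetClocks (R : List ℕ) (w : ℕ → ℝ) : ℕ → ℝ := fun i => if i ∈ R then 0 else w i

def updateEnergies (U : List ℤ) (v : ℕ → ℝ) : ℕ → ℝ := fun i => v i + ((U.getD i 0 : ℤ) : ℝ)

/-- Timestamped traces of a guarded META, written in *reverse* chronological order
(the head of the list is the last state together with its absolute time).  Each step
consists of a delay (during which all intermediate states must be valid) followed by
the firing of an edge whose guard holds. -/
inductive Trace (A : GMETA) : List (EState × ℝ) → Prop where
  | init :
      validState A initState →
      Trace A [(initState, 0)]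
  | step {tr : List (EState × ℝ)} {l : ℕ} {w v : ℕ → ℝ} {τ : ℝ} (t : ℝ) (e : Edge) :
      Trace A (((l, w, v), τ) :: tr) →
      0 ≤ t →
      (∀ t', 0 ≤ t' → t' ≤ t →
        validState A (l, elapseClocks w t', elapseEnergies A l v t')) →
      e ∈ edges A →
      edgeSrc e = l →
      satIneqs A (elapseClocks w t) (elapseEnergies A l v t) (edgeGuard e) →
      validState A (edgeTgt e, resetClocks (edgeResets e) (elapseClocks w t),
        updateEnergies (edgeUpdates e) (elapseEnergies A l v t)) →
      Trace A (((edgeTgt e, resetClocks (edgeResets e) (elapseClocks w t),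
        updateEnergies (edgeUpdates e) (elapseEnergies A l v t)), τ + t)
          :: ((l, w, v), τ) :: tr)

/-- Duration of a run (absolute time of its last state). -/
def runDur (tr : List (EState × ℝ)) : ℝ := tr.headI.2

/-- Last location of a run. -/
def runLoc (tr : List (EState × ℝ)) : ℕ := tr.headI.1.1

/-- Final energies of a run. -/
def runEnergy (tr : List (EState × ℝ)) : ℕ → ℝ := tr.headI.1.2.2

/-- A private run: reaches a final location after having visited a private location. -/
def PrivRun (A : GMETA) (tr : List (EState × ℝ)) : Prop :=
  Trace A tr ∧ runLoc tr ∈ finalLocs A ∧ ∃ p ∈ tr, p.1.1 ∈ privLocs A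

/-- A public run: reaches a final location without ever visiting a private location. -/
def PubRun (A : GMETA) (tr : List (EState × ℝ)) : Prop :=
  Trace A tr ∧ runLoc tr ∈ finalLocs A ∧ ∀ p ∈ tr, p.1.1 ∉ privLocs A

/-- Final energies of private runs. -/
def EVpriv (A : GMETA) : Set (ℕ → ℝ) := {v | ∃ tr, PrivRun A tr ∧ runEnergy tr = v}

/-- Final energies of public runs. -/
def EVpub (A : GMETA) : Set (ℕ → ℝ) := {v | ∃ tr, PubRun A tr ∧ runEnergy tr = v}

/-- Durations of private runs. -/
def DTpriv (A : GMETA) : Set ℝ := {d | ∃ tr, PrivRun A tr ∧ runDur tr = d}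

/-- Durations of public runs. -/
def DTpub (A : GMETA) : Set ℝ := {d | ∃ tr, PubRun A tr ∧ runDur tr = d}

/-- Pairs (duration, final energies) of private runs. -/
def DEVpriv (A : GMETA) : Set (ℝ × (ℕ → ℝ)) :=
  {p | ∃ tr, PrivRun A tr ∧ runDur tr = p.1 ∧ runEnergy tr = p.2}

/-- Pairs (duration, final energies) of public runs. -/
def DEVpub (A : GMETA) : Set (ℝ × (ℕ → ℝ)) :=
  {p | ∃ tr, PubRun A tr ∧ runDur tr = p.1 ∧ runEnergy tr = p.2}

/-- The three variants of opacity: existential, weak, full. -/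
inductive Var3 where
  | ex : Var3
  | weak : Var3
  | full : Var3

/-- δ-EN-opacity. -/
def ENOpaque : Var3 → GMETA → Prop
  | .ex, A => (EVpriv A ∩ EVpub A).Nonempty
  | .weak, A => EVpriv A ⊆ EVpub A
  | .full, A => EVpriv A = EVpub A

/-- δ-ET-EN-opacity. -/
def ETENOpaque : Var3 → GMETA → Prop
  | .ex, A => (DEVpriv A ∩ DEVpub A).Nonempty
  | .weak, A => DEVpriv A ⊆ DEVpub A
  | .full, A => DEVpriv A = DEVpub A

/-- The two observation kinds: final energies only (EN), or duration and final
energies (ET-EN). -/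
inductive Sig2 where
  | en : Sig2
  | eten : Sig2

/-- δ-σ-opacity. -/
def Opq : Var3 → Sig2 → GMETA → Prop
  | δ, .en, A => ENOpaque δ A
  | δ, .eten, A => ETENOpaque δ A

/-- Energy level of a (reverse chronological) run at absolute time `t`: the energy
valuation of the last state reached at absolute time at most `t` (the zero valuation
if there is no such state). -/
noncomputable def ELat : List (EState × ℝ) → ℝ → (ℕ → ℝ)
  | [], _ => fun _ => 0
  | p :: rest, t => if p.2 ≤ t then p.1.2.2 else ELat rest t

/-- Discrete energy observation: energy levels at times `1, …, ⌈duration⌉`. -/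
noncomputable def DEO (tr : List (EState × ℝ)) : List (ℕ → ℝ) :=
  (List.range (Nat.ceil (runDur tr))).map (fun k => ELat tr ((k : ℝ) + 1))

/-- δ-DE-opacity. -/
def DEOpaque : Var3 → GMETA → Prop
  | .ex, A => ∃ tr tr', PrivRun A tr ∧ PubRun A tr' ∧ DEO tr = DEO tr'
  | .weak, A => ∀ tr, PrivRun A tr → ∃ tr', PubRun A tr' ∧ DEO tr = DEO tr'
  | .full, A => (∀ tr, PrivRun A tr → ∃ tr', PubRun A tr' ∧ DEO tr = DEO tr') ∧
      (∀ tr, PubRun A tr → ∃ tr', PrivRun A tr' ∧ DEO tr' = DEO tr)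

/-- Keeps, from a chronological sequence of timestamped energy valuations, exactly the
valuations that change at least one energy variable (w.r.t.\ the previous valuation,
given as first argument). -/
noncomputable def energyChangesAux : (ℕ → ℝ) → List ((ℕ → ℝ) × ℝ) → List ((ℕ → ℝ) × ℝ)
  | _, [] => []
  | prev, p :: rest =>
      if p.1 = prev then energyChangesAux prev rest else p :: energyChangesAux p.1 rest

/-- Timestamped energy changes of a run, in chronological order. -/
noncomputable def energyChanges (tr : List (EState × ℝ)) : List ((ℕ → ℝ) × ℝ) :=
  energyChangesAux (fun _ => 0) (tr.reverse.map (fun p => (p.1.2.2, p.2)))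

/-- Buffered energy level at integer time `τ ≥ 1`: the sequence of successive energy
valuations taken at absolute timestamps in `(τ − 1, τ]` (in `[0, 1]` for `τ = 1`),
keeping only the valuations that change at least one energy variable. -/
noncomputable def bEL (tr : List (EState × ℝ)) (τ : ℕ) : List (ℕ → ℝ) :=
  ((energyChanges tr).filter
    (fun p => decide ((τ = 1 ∨ (τ : ℝ) - 1 < p.2) ∧ p.2 ≤ (τ : ℝ)))).map Prod.fst

/-- Buffered discrete energy observation: `bEL` at times `1, …, ⌈duration⌉`. -/
noncomputable def bDEO (tr : List (EState × ℝ)) : List (List (ℕ → ℝ)) :=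
  (List.range (Nat.ceil (runDur tr))).map (fun k => bEL tr (k + 1))

/-- δ-bDE-opacity. -/
def bDEOpaque : Var3 → GMETA → Prop
  | .ex, A => ∃ tr tr', PrivRun A tr ∧ PubRun A tr' ∧ bDEO tr = bDEO tr'
  | .weak, A => ∀ tr, PrivRun A tr → ∃ tr', PubRun A tr' ∧ bDEO tr = bDEO tr'
  | .full, A => (∀ tr, PrivRun A tr → ∃ tr', PubRun A tr' ∧ bDEO tr = bDEO tr') ∧
      (∀ tr, PubRun A tr → ∃ tr', PrivRun A tr' ∧ bDEO tr' = bDEO tr)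

/-- Basic well-formedness of the presentation: the initial location exists, private and
final locations are non-empty sets of locations, final locations are not private and
have no outgoing edge, invariant and rate lists have the right lengths, and all indices
are in range. -/
def WellFormed (A : GMETA) : Prop :=
  0 < numLoc A ∧
  privLocs A ≠ [] ∧
  finalLocs A ≠ [] ∧
  (∀ l ∈ privLocs A, l < numLoc A) ∧
  (∀ l ∈ finalLocs A, l < numLoc A ∧ l ∉ privLocs A) ∧
  (invs A).length = numLoc A ∧
  (∀ g ∈ invs A, ∀ q ∈ g, q.1 < numClk A + numEn A) ∧
  (rates A).length = numLoc A ∧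
  (∀ r ∈ rates A, r.length = numEn A) ∧
  (∀ e ∈ edges A, edgeSrc e < numLoc A ∧ edgeTgt e < numLoc A ∧
    edgeSrc e ∉ finalLocs A ∧
    (∀ a, edgeAct e = some a → a < numAct A) ∧
    (∀ q ∈ edgeGuard e, q.1 < numClk A + numEn A) ∧
    (∀ x ∈ edgeResets e, x < numClk A) ∧
    (edgeUpdates e).length = numEn A)

/-- Discrete: all energy rates are `0` (energy changes only via edge updates). -/
def Discrete (A : GMETA) : Prop := ∀ r ∈ rates A, ∀ z ∈ r, z = 0

/-- Positive: all energy rates and all energy updates are non-negative. -/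
def Positive (A : GMETA) : Prop :=
  (∀ r ∈ rates A, ∀ z ∈ r, 0 ≤ z) ∧ ∀ e ∈ edges A, ∀ z ∈ edgeUpdates e, 0 ≤ z

/-- META (as opposed to *guarded* META): guards and invariants constrain clocks only. -/
def ClockGuardsOnly (A : GMETA) : Prop :=
  (∀ g ∈ invs A, ∀ q ∈ g, q.1 < numClk A) ∧
    ∀ e ∈ edges A, ∀ q ∈ edgeGuard e, q.1 < numClk A

/-- Integer-switching: along every run, any edge whose target location has a different
energy rate than its source (for some energy variable) is taken at an integer absolute
time. -/
def IntegerSwitching (A : GMETA) : Prop :=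
  ∀ (s' : EState) (τ' : ℝ) (s : EState) (τ : ℝ) (rest : List (EState × ℝ)),
    Trace A ((s', τ') :: (s, τ) :: rest) →
    (∃ i < numEn A, rateOf A s.1 i ≠ rateOf A s'.1 i) →
    ∃ n : ℕ, τ' = (n : ℝ)

/-- Integer execution-time: every run reaching a final location has integer duration. -/
def IntegerET (A : GMETA) : Prop :=
  ∀ tr, Trace A tr → runLoc tr ∈ finalLocs A → ∃ n : ℕ, runDur tr = (n : ℝ)

/-- Some run of `A` reaches a state with location `l`. -/
def ReachLoc (A : GMETA) (l : ℕ) : Prop :=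
  ∃ tr p, Trace A tr ∧ p ∈ tr ∧ p.1.1 = l

/-- Some run of `A` of duration exactly `T` ends in location `l`. -/
def ReachLocInTime (A : GMETA) (l : ℕ) (T : ℕ) : Prop :=
  ∃ tr, Trace A tr ∧ runLoc tr = l ∧ runDur tr = (T : ℝ)

/-- A problem `P` over guarded METAs is decidable on the class `C` when some computable
(Boolean-valued, hence total) function decides it on every automaton of the class. -/
def DecidableOn (C P : GMETA → Prop) : Prop :=
  ∃ f : GMETA → Bool, Computable f ∧ ∀ A, C A → (f A = true ↔ P A)


/-! ### Space-bounded decidability, via Turing machines -/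

/-- Binary presentation of a guarded META on the tape alphabet `Option Bool`. -/
def tapeInput (A : GMETA) : List (Option Bool) := (Nat.bits (Encodable.encode A)).map some

/-- One-step relation of a (deterministic) Turing machine. -/
def TMStep {Λ : Type} [Inhabited Λ]
    (M : Turing.TM0.Machine (Option Bool) Λ) (a b : Turing.TM0.Cfg (Option Bool) Λ) : Prop :=
  Turing.TM0.step M a = some b

/-- `P` is decided on the class `C` by a Turing machine using at most `S n` tape cells
on inputs of length `n`: on every input of the class the machine halts, the halting
configuration reads `some true` at the head iff `P` holds, and every reachable
configuration is blank except within distance `S n` of the head. -/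
def DecidesInSpace (S : ℕ → ℕ) (C P : GMETA → Prop) : Prop :=
  ∃ (Λ : Type) (_ : Inhabited Λ) (_ : Fintype Λ),
  ∃ M : Turing.TM0.Machine (Option Bool) Λ,
    ∀ A : GMETA, C A →
      (∃ c, Relation.ReflTransGen (TMStep M) (Turing.TM0.init (tapeInput A)) c ∧
        Turing.TM0.step M c = none ∧ (c.Tape.head = some true ↔ P A)) ∧
      ∀ c, Relation.ReflTransGen (TMStep M) (Turing.TM0.init (tapeInput A)) c →
        ∀ i : ℤ, (S (tapeInput A).length : ℤ) < |i| → c.Tape.nth i = none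

/-- Membership in `EXPSPACE`, relative to the class `C`. -/
def InEXPSPACEOn (C P : GMETA → Prop) : Prop :=
  ∃ k : ℕ, DecidesInSpace (fun n => 2 ^ (n ^ k + k)) C P

/-- Membership in `2EXPSPACE`, relative to the class `C`. -/
def In2EXPSPACEOn (C P : GMETA → Prop) : Prop :=
  ∃ k : ℕ, DecidesInSpace (fun n => 2 ^ 2 ^ (n ^ k + k)) C P

/-- Membership in `3EXPSPACE`, relative to the class `C`. -/
def In3EXPSPACEOn (C P : GMETA → Prop) : Prop :=
  ∃ k : ℕ, DecidesInSpace (fun n => 2 ^ 2 ^ 2 ^ (n ^ k + k)) C P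

/-! A public run of `gadget A lf` never visits the private location, so it can only reach the
final location through `l₁`, that is, through `lf`; before that it is a run of `A`.
Conversely, a run of `A` reaching `lf` at time `τ` with energies `v` continues instantly
through `l₁` to a public run observed as `(τ, v)`. As `A` is discrete with integer updates and
energies stay non-negative, `v` is a vector of natural numbers; so the private run that enters
the private location at time `0`, takes the self-loop of each energy variable `η` exactly
`v η` times, waits `τ` and leaves is observed as `(τ, v)` too. -/

/-- An unguarded ε-edge without clock resets. -/
def freeEdge (s : ℕ) (U : List ℤ) (t : ℕ) : Edge := (s, [], none, [], U, t)

def zeroUpdate (n : ℕ) : List ℤ := (List.range n).map fun _ => 0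

def unitUpdate (n j : ℕ) : List ℤ := (List.range n).map fun i => if i = j then 1 else 0

theorem length_zeroUpdate (n : ℕ) : (zeroUpdate n).length = n := by
  simp [zeroUpdate]

theorem getD_zeroUpdate (n i : ℕ) : (zeroUpdate n).getD i 0 = 0 := by
  simp [zeroUpdate, List.getD_eq_getElem?_getD]

theorem updateEnergies_zeroUpdate (n : ℕ) (v : ℕ → ℝ) :
    updateEnergies (zeroUpdate n) v = v := by
  funext i
  simp only [updateEnergies, getD_zeroUpdate, Int.cast_zero, add_zero]

theorem updateEnergies_unitUpdate {n j : ℕ} (hj : j < n) (v : ℕ → ℝ) :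
    updateEnergies (unitUpdate n j) v = fun i => v i + if i = j then 1 else 0 := by
  funext i
  by_cases hij : i = j
  · subst hij; simp [updateEnergies, unitUpdate, List.getD_eq_getElem?_getD, hj]
  · rcases lt_or_ge i n with hi | hi <;>
      simp [updateEnergies, unitUpdate, List.getD_eq_getElem?_getD, hij, hi]

theorem validState_of_invOf_eq_nil {B : GMETA} {l : ℕ} {w v : ℕ → ℝ} (hl : l < numLoc B)
    (hinv : invOf B l = []) (hw : ∀ i, 0 ≤ w i) (hv : ∀ i, 0 ≤ v i) :
    validState B (l, w, v) :=
  ⟨hl, hw, hv, by simp [satIneqs, hinv]⟩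

theorem rateOf_eq_zero_of_discrete {B : GMETA} (hD : Discrete B) (l i : ℕ) :
    rateOf B l i = 0 := by
  rw [rateOf, List.getD_eq_getElem?_getD, List.getD_eq_getElem?_getD]
  cases hr : (rates B)[l]? with
  | none => rfl
  | some r =>
    cases hz : r[i]? with
    | none => simp [hz]
    | some z => simpa [hz] using hD r (List.mem_of_getElem? hr) z (List.mem_of_getElem? hz)

namespace Trace

variable {B : GMETA} {tr : List (EState × ℝ)}

theorem validState_of_mem (h : Trace B tr) : ∀ q ∈ tr, validState B q.1 := by
  induction h with
  | init hv => simpa using hv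
  | step _ _ _ _ _ _ _ _ hvt ih => exact List.forall_mem_cons.2 ⟨hvt, ih⟩

theorem validState_initState (h : Trace B tr) : validState B initState := by
  induction h with
  | init hv => exact hv
  | step _ _ _ _ _ _ _ _ _ ih => exact ih

theorem exists_prefix_of_mem (h : Trace B tr) : ∀ q ∈ tr, ∃ tl, Trace B (q :: tl) := by
  induction h with
  | init hv => simpa using ⟨[], init hv⟩
  | step t e htr ht hdelay he hsrc hg hvt ih =>
    exact List.forall_mem_cons.2 ⟨⟨_, step t e htr ht hdelay he hsrc hg hvt⟩, ih⟩

theorem runLoc_lt_numLoc (h : Trace B tr) : runLoc tr < numLoc B := by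
  cases h with
  | init hv => exact hv.1
  | step _ _ _ _ _ _ _ _ hvt => exact hvt.1

theorem runDur_nonneg (h : Trace B tr) : 0 ≤ runDur tr := by
  induction h with
  | init _ => exact le_rfl
  | step _ _ _ ht _ _ _ _ _ ih => exact add_nonneg ih ht

theorem runEnergy_nonneg (h : Trace B tr) (i : ℕ) : 0 ≤ runEnergy tr i := by
  cases h with
  | init _ => exact le_rfl
  | step _ _ _ _ _ _ _ _ hvt => exact hvt.2.2.1 i

theorem exists_int_runEnergy (hD : Discrete B)
    (hU : ∀ e ∈ edges B, (edgeUpdates e).length = numEn B) (h : Trace B tr) :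
    ∃ z : ℕ → ℤ, runEnergy tr = fun i => if i < numEn B then (z i : ℝ) else 0 := by
  induction h with
  | init _ => exact ⟨0, by funext i; simp [runEnergy, initState]⟩
  | @step _ _ _ v _ _ e _ _ _ he _ _ _ ih =>
    obtain ⟨z, hz⟩ := ih
    refine ⟨fun i => z i + (edgeUpdates e).getD i 0, funext fun i => ?_⟩
    have hv : v i = if i < numEn B then (z i : ℝ) else 0 := congrFun hz i
    simp only [runEnergy, List.headI, updateEnergies, elapseEnergies,
      rateOf_eq_zero_of_discrete hD, Int.cast_zero, zero_mul, add_zero, hv]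
    split_ifs with hi
    · push_cast; rfl
    · rw [List.getD_eq_default _ _ (by rw [hU e he]; omega)]
      simp

theorem exists_nat_runEnergy (hD : Discrete B)
    (hU : ∀ e ∈ edges B, (edgeUpdates e).length = numEn B) (h : Trace B tr) :
    ∃ k : ℕ → ℕ, runEnergy tr = fun i => if i < numEn B then (k i : ℝ) else 0 := by
  obtain ⟨z, hz⟩ := h.exists_int_runEnergy hD hU
  refine ⟨fun i => (z i).toNat, funext fun i => ?_⟩
  rw [hz]
  dsimp only
  split_ifs with hi
  · have : (0 : ℝ) ≤ z i := by simpa [hz, hi] using h.runEnergy_nonneg i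
    exact_mod_cast (Int.toNat_of_nonneg (by exact_mod_cast this)).symm
  · rfl

variable {l l' : ℕ} {U : List ℤ} {w v v' : ℕ → ℝ} {τ : ℝ}

theorem freeEdge_step (h : Trace B (((l, w, v), τ) :: tr)) (he : freeEdge l U l' ∈ edges B)
    (hU : updateEnergies U v = v') (hval : validState B (l', w, v')) :
    Trace B (((l', w, v'), τ) :: ((l, w, v), τ) :: tr) := by
  have hw : elapseClocks w 0 = w := by funext i; simp [elapseClocks]
  have hr : resetClocks [] w = w := by funext i; simp [resetClocks]
  have hE : elapseEnergies B l v 0 = v := by funext i; simp [elapseEnergies]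
  have := step 0 _ h le_rfl
    (fun t' h1 h2 => by
      rw [le_antisymm h2 h1, hw, hE]; exact h.validState_of_mem _ List.mem_cons_self)
    he rfl (by simp [satIneqs, freeEdge, edgeGuard])
    (by dsimp only [freeEdge, edgeTgt, edgeResets, edgeUpdates]; rwa [hw, hr, hE, hU])
  dsimp only [freeEdge, edgeTgt, edgeResets, edgeUpdates] at this
  rwa [hw, hr, hE, hU, add_zero] at this

theorem freeEdge_step_after_delay (h : Trace B (((l, w, v), τ) :: tr))
    (hrate : ∀ i, rateOf B l i = 0) (hinv : invOf B l = []) {t : ℝ} (ht : 0 ≤ t)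
    (he : freeEdge l U l' ∈ edges B) (hU : updateEnergies U v = v')
    (hval : validState B (l', elapseClocks w t, v')) :
    Trace B (((l', elapseClocks w t, v'), τ + t) :: ((l, w, v), τ) :: tr) := by
  obtain ⟨hl, hw, hv, -⟩ := h.validState_of_mem _ List.mem_cons_self
  have hr : resetClocks [] (elapseClocks w t) = elapseClocks w t := by
    funext i; simp [resetClocks]
  have hE : ∀ t, elapseEnergies B l v t = v := fun t => by
    funext i; simp [elapseEnergies, hrate]
  have := step t _ h ht
    (fun t' h1 _ => by
      rw [hE]
      exact validState_of_invOf_eq_nil hl hinv (fun i => add_nonneg (hw i) h1) hv)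
    he rfl (by simp [satIneqs, freeEdge, edgeGuard])
    (by dsimp only [freeEdge, edgeTgt, edgeResets, edgeUpdates]; rwa [hr, hE, hU])
  dsimp only [freeEdge, edgeTgt, edgeResets, edgeUpdates] at this
  rwa [hr, hE, hU] at this

theorem iterate_loop {n j : ℕ} (hinv : invOf B l = []) (hj : j < n)
    (hloop : freeEdge l (unitUpdate n j) l ∈ edges B) (h : Trace B (((l, w, v), τ) :: tr))
    (c : ℕ) :
    ∃ tl, Trace B (((l, w, fun i => v i + if i = j then (c : ℝ) else 0), τ) :: tl) := by
  obtain ⟨hl, hw, hv, -⟩ := h.validState_of_mem _ List.mem_cons_self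
  induction c with
  | zero => exact ⟨tr, by simpa using h⟩
  | succ c ih =>
    obtain ⟨tl, h'⟩ := ih
    refine ⟨_, h'.freeEdge_step hloop ?_ (validState_of_invOf_eq_nil hl hinv hw fun i => ?_)⟩
    · rw [updateEnergies_unitUpdate hj]
      funext i
      split_ifs <;> push_cast <;> ring
    · have := hv i
      split_ifs <;> positivity

theorem pump {n : ℕ} (hinv : invOf B l = [])
    (hloop : ∀ j < n, freeEdge l (unitUpdate n j) l ∈ edges B)
    (h : Trace B (((l, w, v), τ) :: tr)) (k : ℕ → ℕ) :
    ∃ tl, Trace B (((l, w, fun i => v i + if i < n then (k i : ℝ) else 0), τ) :: tl) := by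
  suffices ∀ m ≤ n,
      ∃ tl, Trace B (((l, w, fun i => v i + if i < m then (k i : ℝ) else 0), τ) :: tl) from
    this n le_rfl
  intro m
  induction m with
  | zero => exact fun _ => ⟨tr, by simpa using h⟩
  | succ m ih =>
    intro hm
    obtain ⟨tl, h'⟩ := ih (by omega)
    obtain ⟨tl', h''⟩ := h'.iterate_loop hinv hm (hloop m hm) (k m)
    refine ⟨tl', ?_⟩
    convert h'' using 5
    funext i
    rcases lt_trichotomy i m with hi | rfl | hi
    · simp [hi, hi.ne, show i < m + 1 by omega]
    · simp
    · simp [hi.ne', show ¬i < m by omega, show ¬i < m + 1 by omega]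

end Trace

section Gadget

/-- The new locations are `numLoc A` (private), `numLoc A + 1` (the paper's `l₁`) and
`numLoc A + 2` (final). -/
def gadgetEdges (A : GMETA) (lf : ℕ) : List Edge :=
  freeEdge 0 (zeroUpdate (numEn A)) (numLoc A) ::
    ((List.range (numEn A)).map fun j =>
      freeEdge (numLoc A) (unitUpdate (numEn A) j) (numLoc A)) ++
    [freeEdge (numLoc A) (zeroUpdate (numEn A)) (numLoc A + 2),
      freeEdge lf (zeroUpdate (numEn A)) (numLoc A + 1),
      freeEdge (numLoc A + 1) (zeroUpdate (numEn A)) (numLoc A + 2)]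

def gadget (A : GMETA) (lf : ℕ) : GMETA :=
  (numAct A, numLoc A + 3, numClk A, numEn A, [numLoc A], [numLoc A + 2],
    invs A ++ List.replicate 3 [], rates A ++ List.replicate 3 (zeroUpdate (numEn A)),
    edges A ++ gadgetEdges A lf)

variable {A : GMETA} {lf l : ℕ}

@[simp] theorem numLoc_gadget : numLoc (gadget A lf) = numLoc A + 3 := rfl

@[simp] theorem numEn_gadget : numEn (gadget A lf) = numEn A := rfl

@[simp] theorem privLocs_gadget : privLocs (gadget A lf) = [numLoc A] := rfl

@[simp] theorem finalLocs_gadget : finalLocs (gadget A lf) = [numLoc A + 2] := rfl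

theorem mem_gadgetEdges {e : Edge} :
    e ∈ gadgetEdges A lf ↔ e = freeEdge 0 (zeroUpdate (numEn A)) (numLoc A) ∨
      (∃ j < numEn A, e = freeEdge (numLoc A) (unitUpdate (numEn A) j) (numLoc A)) ∨
      e = freeEdge (numLoc A) (zeroUpdate (numEn A)) (numLoc A + 2) ∨
      e = freeEdge lf (zeroUpdate (numEn A)) (numLoc A + 1) ∨
      e = freeEdge (numLoc A + 1) (zeroUpdate (numEn A)) (numLoc A + 2) := by
  simp [gadgetEdges, eq_comm]

theorem invOf_gadget_of_lt (hinv : (invs A).length = numLoc A) (hl : l < numLoc A) :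
    invOf (gadget A lf) l = invOf A l :=
  List.getD_append _ _ _ _ (by omega)

theorem invOf_gadget_of_le (hinv : (invs A).length = numLoc A) (hl : numLoc A ≤ l) :
    invOf (gadget A lf) l = [] := by
  rw [invOf, invs, gadget, List.getD_append_right _ _ _ _ (by omega),
    List.getD_eq_getElem?_getD, List.getElem?_getD_replicate_default_eq]

theorem rateOf_gadget_of_lt (hrates : (rates A).length = numLoc A) (hl : l < numLoc A) :
    rateOf (gadget A lf) l = rateOf A l := by
  funext i
  rw [rateOf, rates, gadget, List.getD_append _ _ _ _ (by omega)]
  rfl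

theorem rateOf_gadget_of_le (hrates : (rates A).length = numLoc A) (hl : numLoc A ≤ l)
    (i : ℕ) : rateOf (gadget A lf) l i = 0 := by
  rw [rateOf, rates, gadget, List.getD_append_right _ _ _ _ (by omega)]
  by_cases h : l - (rates A).length < 3
  · rw [List.getD_replicate (h := h), getD_zeroUpdate]
  · rw [List.getD_eq_default (List.replicate 3 _) [] (by rw [List.length_replicate]; omega)]
    rfl

theorem elapseEnergies_gadget_of_lt (hrates : (rates A).length = numLoc A)
    (hl : l < numLoc A) : elapseEnergies (gadget A lf) l = elapseEnergies A l := by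
  funext v t i
  rw [elapseEnergies, elapseEnergies, rateOf_gadget_of_lt hrates hl]

theorem validState_gadget_iff (hinv : (invs A).length = numLoc A) (hl : l < numLoc A)
    {w v : ℕ → ℝ} : validState (gadget A lf) (l, w, v) ↔ validState A (l, w, v) := by
  simp only [validState, invOf_gadget_of_lt hinv hl, hl, numLoc_gadget, true_and]
  exact ⟨fun h => h.2, fun h => ⟨by omega, h⟩⟩

theorem validState_gadget_of_le (hinv : (invs A).length = numLoc A) (hl : numLoc A ≤ l)
    (hl' : l < numLoc A + 3) {w v : ℕ → ℝ} (hw : ∀ i, 0 ≤ w i) (hv : ∀ i, 0 ≤ v i) :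
    validState (gadget A lf) (l, w, v) :=
  validState_of_invOf_eq_nil hl' (invOf_gadget_of_le hinv hl) hw hv

theorem discrete_gadget (hD : Discrete A) : Discrete (gadget A lf) := by
  intro r hr
  rcases List.mem_append.1 hr with hr | hr
  · exact hD r hr
  · rw [List.eq_of_mem_replicate hr]
    simp [zeroUpdate]

theorem clockGuardsOnly_gadget (hCG : ClockGuardsOnly A) : ClockGuardsOnly (gadget A lf) := by
  refine ⟨fun g hg => ?_, fun e he => ?_⟩
  · rcases List.mem_append.1 hg with hg | hg
    · exact hCG.1 g hg
    · simp [List.eq_of_mem_replicate hg]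
  · rcases List.mem_append.1 he with he | he
    · exact hCG.2 e he
    · rcases mem_gadgetEdges.1 he with rfl | ⟨j, -, rfl⟩ | rfl | rfl | rfl <;>
        simp [freeEdge, edgeGuard]

theorem wellFormed_gadget (hWF : WellFormed A) (hlf : lf < numLoc A) :
    WellFormed (gadget A lf) := by
  obtain ⟨-, -, -, -, -, hinv, hinvVars, hrates, hratesLen, hedges⟩ := hWF
  refine ⟨by simp, by simp, by simp, by simp, by simp,
    show (invs A ++ _).length = numLoc A + 3 by simp [hinv], fun g hg => ?_,
    show (rates A ++ _).length = numLoc A + 3 by simp [hrates], fun r hr => ?_, fun e he => ?_⟩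
  · rcases List.mem_append.1 hg with hg | hg
    · exact hinvVars g hg
    · simp [List.eq_of_mem_replicate hg]
  · rcases List.mem_append.1 hr with hr | hr
    · exact hratesLen r hr
    · rw [List.eq_of_mem_replicate hr, length_zeroUpdate]; rfl
  · rcases List.mem_append.1 he with he | he
    · obtain ⟨hs, ht, -, hrest⟩ := hedges e he
      exact ⟨by simp; omega, by simp; omega, by simp; omega, hrest⟩
    · rcases mem_gadgetEdges.1 he with rfl | ⟨j, -, rfl⟩ | rfl | rfl | rfl <;>
        simp [freeEdge, edgeSrc, edgeTgt, edgeAct, edgeGuard, edgeResets, edgeUpdates,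
          zeroUpdate, unitUpdate]
      omega

end Gadget

section Computability

open Primrec

theorem primrec_numAct : Primrec numAct := fst

theorem primrec_numLoc : Primrec numLoc := fst.comp snd

theorem primrec_numClk : Primrec numClk := fst.comp (snd.comp snd)

theorem primrec_numEn : Primrec numEn := fst.comp (snd.comp (snd.comp snd))

theorem primrec_invs : Primrec invs :=
  fst.comp (snd.comp (snd.comp (snd.comp (snd.comp (snd.comp snd)))))

theorem primrec_rates : Primrec rates :=
  fst.comp (snd.comp (snd.comp (snd.comp (snd.comp (snd.comp (snd.comp snd))))))

theorem primrec_edges : Primrec edges :=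
  snd.comp (snd.comp (snd.comp (snd.comp (snd.comp (snd.comp (snd.comp snd))))))

theorem primrec_zeroUpdate : Primrec zeroUpdate :=
  list_map list_range (Primrec₂.const 0)

theorem primrec₂_unitUpdate : Primrec₂ unitUpdate :=
  list_map (list_range.comp fst)
    (ite (Primrec.eq.comp snd (snd.comp fst)) (const 1) (const 0))

theorem primrec_freeEdge {α : Type} [Primcodable α] {s t : α → ℕ} {U : α → List ℤ}
    (hs : Primrec s) (hU : Primrec U) (ht : Primrec t) :
    Primrec fun a => freeEdge (s a) (U a) (t a) :=
  hs.pair ((const []).pair ((const none).pair ((const []).pair (hU.pair ht))))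

theorem primrec₂_gadgetEdges : Primrec₂ gadgetEdges := by
  have hn : Primrec fun p : GMETA × ℕ => numLoc p.1 := primrec_numLoc.comp fst
  have hz : Primrec fun p : GMETA × ℕ => zeroUpdate (numEn p.1) :=
    primrec_zeroUpdate.comp (primrec_numEn.comp fst)
  have hloops : Primrec fun p : GMETA × ℕ => (List.range (numEn p.1)).map fun j =>
      freeEdge (numLoc p.1) (unitUpdate (numEn p.1) j) (numLoc p.1) :=
    list_map (list_range.comp (primrec_numEn.comp fst))
      (primrec_freeEdge (hn.comp fst)
        (primrec₂_unitUpdate.comp (primrec_numEn.comp (fst.comp fst)) snd) (hn.comp fst))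
  exact list_cons.comp (primrec_freeEdge (const 0) hz hn) (list_append.comp hloops
    (list_cons.comp (primrec_freeEdge hn hz (succ.comp (succ.comp hn)))
      (list_cons.comp (primrec_freeEdge snd hz (succ.comp hn))
        (list_cons.comp (primrec_freeEdge (succ.comp hn) hz (succ.comp (succ.comp hn)))
          (const [])))))

theorem primrec_gadget : Primrec fun p : GMETA × ℕ => gadget p.1 p.2 := by
  have hn : Primrec fun p : GMETA × ℕ => numLoc p.1 := primrec_numLoc.comp fst
  have hz : Primrec fun p : GMETA × ℕ => zeroUpdate (numEn p.1) :=
    primrec_zeroUpdate.comp (primrec_numEn.comp fst)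
  exact (primrec_numAct.comp fst).pair ((succ.comp (succ.comp (succ.comp hn))).pair
    ((primrec_numClk.comp fst).pair ((primrec_numEn.comp fst).pair
    ((list_cons.comp hn (const [])).pair
    ((list_cons.comp (succ.comp (succ.comp hn)) (const [])).pair
    ((list_append.comp (primrec_invs.comp fst) (const _)).pair
    ((list_append.comp (primrec_rates.comp fst)
      (list_cons.comp hz (list_cons.comp hz (list_cons.comp hz (const []))))).pair
    (list_append.comp (primrec_edges.comp fst) primrec₂_gadgetEdges))))))))

end Computability

section Transfer

variable {A : GMETA} {lf : ℕ} {tr : List (EState × ℝ)}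

theorem Trace.to_gadget (hinv : (invs A).length = numLoc A)
    (hrates : (rates A).length = numLoc A) (h : Trace A tr) : Trace (gadget A lf) tr := by
  induction h with
  | init hv => exact .init ((validState_gadget_iff hinv hv.1).2 hv)
  | @step _ l _ _ _ t e htr ht hdelay he hsrc hg hvt ih =>
    have hl : l < numLoc A := (htr.validState_of_mem _ List.mem_cons_self).1
    rw [← elapseEnergies_gadget_of_lt (lf := lf) hrates hl] at hdelay hg hvt ⊢
    exact .step t e ih ht (fun t' h1 h2 => (validState_gadget_iff hinv hl).2 (hdelay t' h1 h2))
      (List.mem_append_left _ he) hsrc hg ((validState_gadget_iff hinv hvt.1).2 hvt)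

theorem Trace.of_gadget (hinv : (invs A).length = numLoc A)
    (hrates : (rates A).length = numLoc A) (hedges : ∀ e ∈ edges A, edgeTgt e < numLoc A)
    (h : Trace (gadget A lf) tr) (hP : ∀ q ∈ tr, q.1.1 ≠ numLoc A) :
    Trace A tr ∨ ReachLoc A lf := by
  induction h with
  | init hv =>
    have h0 : 0 < numLoc A := Nat.pos_of_ne_zero (hP _ List.mem_cons_self).symm
    exact .inl (.init ((validState_gadget_iff hinv h0).1 hv))
  | @step _ l _ _ _ t e htr ht hdelay he hsrc hg hvt ih =>
    rcases ih fun q hq => hP q (List.mem_cons_of_mem _ hq) with hA | hreach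
    · have hl : l < numLoc A := (hA.validState_of_mem _ List.mem_cons_self).1
      rcases List.mem_append.1 he with he | he
      · rw [elapseEnergies_gadget_of_lt hrates hl] at hdelay hg hvt ⊢
        exact .inl (.step t e hA ht
          (fun t' h1 h2 => (validState_gadget_iff hinv hl).1 (hdelay t' h1 h2)) he hsrc hg
          ((validState_gadget_iff hinv (hedges e he)).1 hvt))
      · have hsrc' : edgeSrc e = l := hsrc
        rcases mem_gadgetEdges.1 he with rfl | ⟨j, -, rfl⟩ | rfl | rfl | rfl
        · exact absurd rfl (hP _ List.mem_cons_self)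
        all_goals simp only [freeEdge, edgeSrc] at hsrc'
        · omega
        · omega
        · exact .inr ⟨_, _, hA, List.mem_cons_self, hsrc'.symm⟩
        · omega
    · exact .inr hreach

theorem pubRun_gadget (hinv : (invs A).length = numLoc A) (hrates : (rates A).length = numLoc A)
    {w v : ℕ → ℝ} {τ : ℝ} (h : Trace A (((lf, w, v), τ) :: tr)) :
    PubRun (gadget A lf)
      (((numLoc A + 2, w, v), τ) :: ((numLoc A + 1, w, v), τ) :: ((lf, w, v), τ) :: tr) := by
  obtain ⟨-, hw, hv, -⟩ := h.validState_of_mem _ List.mem_cons_self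
  have hnew : ∀ l, numLoc A < l → l < numLoc A + 3 → validState (gadget A lf) (l, w, v) :=
    fun l hl hl' => validState_gadget_of_le hinv hl.le hl' hw hv
  have htoL1 := (h.to_gadget hinv hrates).freeEdge_step (U := zeroUpdate (numEn A))
    (l' := numLoc A + 1) (List.mem_append_right _ (mem_gadgetEdges.2 (by simp)))
    (updateEnergies_zeroUpdate _ _) (hnew _ (by omega) (by omega))
  refine ⟨htoL1.freeEdge_step (U := zeroUpdate (numEn A)) (l' := numLoc A + 2)
    (List.mem_append_right _ (mem_gadgetEdges.2 (by simp))) (updateEnergies_zeroUpdate _ _)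
    (hnew _ (by omega) (by omega)), by simp [runLoc], fun q hq => ?_⟩
  rw [privLocs_gadget, List.mem_singleton]
  rcases List.mem_cons.1 hq with rfl | hq
  · simp
  rcases List.mem_cons.1 hq with rfl | hq
  · simp
  · exact (h.validState_of_mem q hq).1.ne

theorem exists_privRun_gadget (hinv : (invs A).length = numLoc A)
    (hrates : (rates A).length = numLoc A) (hinit : validState A initState) (k : ℕ → ℕ)
    {τ : ℝ} (hτ : 0 ≤ τ) :
    ∃ tr, PrivRun (gadget A lf) tr ∧ runDur tr = τ ∧
      runEnergy tr = fun i => if i < numEn A then (k i : ℝ) else 0 := by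
  have hinvP : invOf (gadget A lf) (numLoc A) = [] := invOf_gadget_of_le hinv le_rfl
  have hstart : Trace (gadget A lf) [((0, fun _ => 0, fun _ => 0), 0)] :=
    .init ((validState_gadget_iff hinv hinit.1).2 hinit)
  have htoP := hstart.freeEdge_step (U := zeroUpdate (numEn A)) (l' := numLoc A)
    (List.mem_append_right _ (mem_gadgetEdges.2 (by simp))) (updateEnergies_zeroUpdate _ _)
    (validState_gadget_of_le hinv le_rfl (by omega) (fun _ => le_rfl) (fun _ => le_rfl))
  obtain ⟨tl, hpumped⟩ := htoP.pump (n := numEn A) hinvP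
    (fun j hj => List.mem_append_right _ (mem_gadgetEdges.2 (.inr (.inl ⟨j, hj, rfl⟩)))) k
  simp only [zero_add] at hpumped
  refine ⟨_, ⟨hpumped.freeEdge_step_after_delay (U := zeroUpdate (numEn A))
    (l' := numLoc A + 2) (rateOf_gadget_of_le hrates le_rfl) hinvP hτ
    (List.mem_append_right _ (mem_gadgetEdges.2 (by simp))) (updateEnergies_zeroUpdate _ _)
    (validState_gadget_of_le hinv (by omega) (by omega) (fun _ => by simpa [elapseClocks])
      (fun i => by positivity)), by simp [runLoc],
    _, List.mem_cons_of_mem _ List.mem_cons_self, by simp⟩, by simp [runDur], rfl⟩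

theorem reachLoc_of_pubRun_gadget (hinv : (invs A).length = numLoc A)
    (hrates : (rates A).length = numLoc A) (hedges : ∀ e ∈ edges A, edgeTgt e < numLoc A)
    (h : PubRun (gadget A lf) tr) : ReachLoc A lf := by
  obtain ⟨htr, hfin, hpub⟩ := h
  refine (htr.of_gadget hinv hrates hedges fun q hq => ?_).resolve_left fun hA => ?_
  · simpa using hpub q hq
  · have : runLoc tr = numLoc A + 2 := by simpa using hfin
    have := hA.runLoc_lt_numLoc
    omega

theorem exETENOpaque_gadget_of_reachLoc (hinv : (invs A).length = numLoc A)
    (hrates : (rates A).length = numLoc A) (hD : Discrete A)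
    (hU : ∀ e ∈ edges A, (edgeUpdates e).length = numEn A) (h : ReachLoc A lf) :
    ETENOpaque .ex (gadget A lf) := by
  obtain ⟨tr, ⟨⟨l, w, v⟩, τ⟩, htr, hq, hl⟩ := h
  obtain ⟨tl, hreach⟩ := htr.exists_prefix_of_mem _ hq
  subst hl
  obtain ⟨k, hk⟩ := hreach.exists_nat_runEnergy hD hU
  obtain ⟨trp, hpriv, hdur, hen⟩ :=
    exists_privRun_gadget (lf := l) hinv hrates hreach.validState_initState k hreach.runDur_nonneg
  exact ⟨(τ, v), ⟨trp, hpriv, hdur, hen.trans hk.symm⟩,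
    ⟨_, pubRun_gadget hinv hrates hreach, rfl, rfl⟩⟩

end Transfer

/-- Every discrete META `A` with a distinguished location `lf` can be
effectively extended to a discrete META `A'` such that `A'` is ∃-ET-EN-opaque iff `lf`
is reachable in `A`.  Hence reachability in discrete METAs reduces to ∃-ET-EN-opacity. -/
theorem reachability_reduces_to_exETENOpacity :
    ∃ g : GMETA × ℕ → GMETA, Computable g ∧
      ∀ (A : GMETA) (lf : ℕ),
        WellFormed A → Discrete A → ClockGuardsOnly A → lf < numLoc A →
        WellFormed (g (A, lf)) ∧ Discrete (g (A, lf)) ∧ ClockGuardsOnly (g (A, lf)) ∧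
          (ETENOpaque Var3.ex (g (A, lf)) ↔ ReachLoc A lf) := by
  refine ⟨fun p => gadget p.1 p.2, primrec_gadget.to_comp, fun A lf hWF hD hCG hlf => ?_⟩
  obtain ⟨-, -, -, -, -, hinv, -, hrates, -, hedges⟩ := id hWF
  refine ⟨wellFormed_gadget hWF hlf, discrete_gadget hD, clockGuardsOnly_gadget hCG,
    fun ⟨_, _, tr, hpub, _⟩ => ?_, exETENOpaque_gadget_of_reachLoc hinv hrates hD ?_⟩
  · exact reachLoc_of_pubRun_gadget hinv hrates (fun e he => (hedges e he).2.1) hpub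
  · exact fun e he => (hedges e he).2.2.2.2.2.2

end METAOpacity
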